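/- For every integer k ≥ 2 and every n ≥ 1, the strip entropies satisfy the recursion h_{n+1}^{(k)} = h_n^{(k)} + ((k−1)/k^{n+1})·log(1+r_{n−1}^k) + (1/k^{n+1})·log c_n − (1/k^n)·log c_{n−1}. -/
import Mathlib


/-- `(B_n(0), B_n(1))` for hard-core labelings of the complete rooted `k`-ary tree. -/
noncomputable def Bp (k : ℕ) : ℕ → ℝ × ℝ
  | 0 => (1, 1)
  | n + 1 => (((Bp k n).1 + (Bp k n).2) ^ k, (Bp k n).1 ^ k)

/-- `B_n = B_n(0) + B_n(1)`. -/
noncomputable def Bt (k n : ℕ) : ℝ := (Bp k n).1 + (Bp k n).2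

/-- `r_n = B_n(0) / B_n`. -/
noncomputable def rt (k n : ℕ) : ℝ := (Bp k n).1 / Bt k n

/-- `c_n = (1 + √(1 + 4 r_n^{k−1}))/2`. -/
noncomputable def ct (k n : ℕ) : ℝ := (1 + Real.sqrt (1 + 4 * rt k n ^ (k - 1))) / 2

/-- `λ_n = B_n^{k−1} c_n`. -/
noncomputable def lamt (k n : ℕ) : ℝ := Bt k n ^ (k - 1) * ct k n

/-- `h_n^{(k)} = log λ_{n−1} / kⁿ`, the site-specific strip entropy (for `n ≥ 1`). -/
noncomputable def hstrip (k n : ℕ) : ℝ := Real.log (lamt k (n - 1)) / (k : ℝ) ^ n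

lemma Bp_pos (k : ℕ) (n : ℕ) : 0 < (Bp k n).1 ∧ 0 < (Bp k n).2 := by
  induction n with
  | zero => simp [Bp]
  | succ m ih =>
    refine ⟨pow_pos (by linarith [ih.1, ih.2]) _, pow_pos ih.1 _⟩

lemma Bt_pos (k n : ℕ) : 0 < Bt k n := by
  have := Bp_pos k n; unfold Bt; linarith [this.1, this.2]

lemma rt_pos (k n : ℕ) : 0 < rt k n :=
  div_pos (Bp_pos k n).1 (Bt_pos k n)

lemma ct_pos (k n : ℕ) : 0 < ct k n := by
  unfold ct
  have := Real.sqrt_nonneg (1 + 4 * rt k n ^ (k - 1))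
  positivity

lemma Bt_succ (k n : ℕ) : Bt k (n + 1) = Bt k n ^ k * (1 + rt k n ^ k) := by
  have hB := Bt_pos k n
  unfold rt
  rw [div_pow, mul_add, mul_one, mul_div_cancel₀ _ (pow_ne_zero _ hB.ne')]
  show ((Bp k n).1 + (Bp k n).2) ^ k + (Bp k n).1 ^ k = _
  unfold Bt
  ring

/-- The strip entropies satisfy, for `n ≥ 1`:
`h_{n+1} = h_n + ((k−1)/k^{n+1}) log(1+r_{n−1}^k) + (1/k^{n+1}) log c_n − (1/kⁿ) log c_{n−1}`. -/
theorem strip_entropy_recursion (k : ℕ) (hk : 2 ≤ k) (n : ℕ) (hn : 1 ≤ n) :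
    hstrip k (n + 1) =
      hstrip k n + ((k : ℝ) - 1) / (k : ℝ) ^ (n + 1) * Real.log (1 + rt k (n - 1) ^ k)
        + 1 / (k : ℝ) ^ (n + 1) * Real.log (ct k n)
        - 1 / (k : ℝ) ^ n * Real.log (ct k (n - 1)) := by
  obtain ⟨m, rfl⟩ := Nat.exists_eq_add_of_le hn
  simp only [Nat.add_sub_cancel, Nat.add_sub_cancel_left] at *
  have hB := Bt_pos k m
  have hR : 0 < 1 + rt k m ^ k := by have := rt_pos k m; positivity
  have hC1 := ct_pos k (m + 1)
  have hC0 := ct_pos k m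
  have h1m : 1 + m = m + 1 := by omega
  rw [h1m] at *
  unfold hstrip lamt
  simp only [Nat.add_sub_cancel]
  rw [Bt_succ]
  rw [Real.log_mul (pow_ne_zero _ (mul_pos (pow_pos hB k) hR).ne') hC1.ne',
    Real.log_pow, Real.log_mul (pow_ne_zero _ hB.ne') hR.ne', Real.log_pow,
    Real.log_mul (pow_ne_zero _ hB.ne') hC0.ne', Real.log_pow]
  have hkR : ((k - 1 : ℕ) : ℝ) = (k : ℝ) - 1 := by
    have : 1 ≤ k := by omega
    push_cast [this]; ring
  rw [hkR]
  have hk0 : (k : ℝ) ≠ 0 := by positivity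
  field_simp
  ring
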